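/- arXiv:2010.05253 — 5 statements merged into one kernel-verified Lean document; each statement's English description precedes it below -/
import Mathlib

section
/- For unary encoding with the ε-LDP equality constraint p = q·e^ε/(1-q+q·e^ε), the approximate variance function q ↦ (1-q+q·e^ε)²/(N·q·(1-q)·(e^ε-1)²) over q ∈ (0,1) is minimized at q = 1/(e^ε+1), where it attains the value 4e^ε/(N(e^ε-1)²). -/
/-!
Write `a = 1 - q` and `b = q e^ε`, so that the numerator of `Var q` is `(a + b)²` and, apart from
the factor `N (e^ε - 1)²`, the denominator is `q (1 - q) = a b / e^ε`. AM-GM gives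
`(a + b)² ≥ 4 a b`, hence `Var q ≥ 4 e^ε / (N (e^ε - 1)²)`, with equality exactly when `a = b`,
i.e. at `q = 1 / (e^ε + 1)`.
-/

/-- The variance of unary encoding with flip probability `q`, up to the factor `N (e - 1)²`. -/
noncomputable def unaryEncodingVarianceRatio (e q : ℝ) : ℝ :=
  (1 - q + q * e) ^ 2 / (q * (1 - q))

theorem four_mul_le_unaryEncodingVarianceRatio (e : ℝ) {q : ℝ} (hq₀ : 0 < q) (hq₁ : q < 1) :
    4 * e ≤ unaryEncodingVarianceRatio e q := by
  have hpos : 0 < q * (1 - q) := mul_pos hq₀ (sub_pos.mpr hq₁)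
  rw [unaryEncodingVarianceRatio, le_div_iff₀ hpos]
  calc 4 * e * (q * (1 - q)) = 4 * (1 - q) * (q * e) := by ring
    _ ≤ (1 - q + q * e) ^ 2 := four_mul_le_sq_add _ _

theorem unaryEncodingVarianceRatio_inv_add_one {e : ℝ} (he : 0 < e) :
    unaryEncodingVarianceRatio e (1 / (e + 1)) = 4 * e := by
  have he₁ : e + 1 ≠ 0 := by positivity
  have hnum : 1 - 1 / (e + 1) + 1 / (e + 1) * e = 2 * e / (e + 1) := by field_simp; ring
  have hden : 1 / (e + 1) * (1 - 1 / (e + 1)) = e / (e + 1) ^ 2 := by field_simp; ring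
  rw [unaryEncodingVarianceRatio, hnum, hden, div_pow,
    div_div_div_cancel_right₀ (pow_ne_zero 2 he₁)]
  field_simp
  ring

theorem oue_variance_minimizer_general (N : ℕ) (ε : ℝ)
    (Var : ℝ → ℝ)
    (hVar : ∀ q, Var q =
      (1 - q + q * Real.exp ε) ^ 2 / (N * q * (1 - q) * (Real.exp ε - 1) ^ 2)) :
    (∀ q, 0 < q → q < 1 → Var (1 / (Real.exp ε + 1)) ≤ Var q) ∧
      Var (1 / (Real.exp ε + 1)) = 4 * Real.exp ε / (N * (Real.exp ε - 1) ^ 2) := by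
  set e := Real.exp ε
  have hVar_ratio : ∀ q, Var q = unaryEncodingVarianceRatio e q / (N * (e - 1) ^ 2) := by
    intro q
    rw [hVar, unaryEncodingVarianceRatio, div_div]
    ring_nf
  have hmin : Var (1 / (e + 1)) = 4 * e / (N * (e - 1) ^ 2) := by
    rw [hVar_ratio, unaryEncodingVarianceRatio_inv_add_one (Real.exp_pos ε)]
  refine ⟨fun q hq₀ hq₁ => ?_, hmin⟩
  rw [hmin, hVar_ratio]
  exact div_le_div_of_nonneg_right (four_mul_le_unaryEncodingVarianceRatio e hq₀ hq₁) (by positivity)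

theorem oue_variance_minimizer (N : ℕ) (hN : 0 < N) (ε : ℝ) (hε : 0 < ε)
    (Var : ℝ → ℝ)
    (hVar : ∀ q, Var q =
      (1 - q + q * Real.exp ε) ^ 2 / (N * q * (1 - q) * (Real.exp ε - 1) ^ 2)) :
    (∀ q, 0 < q → q < 1 → Var (1 / (Real.exp ε + 1)) ≤ Var q) ∧
      Var (1 / (Real.exp ε + 1)) = 4 * Real.exp ε / (N * (Real.exp ε - 1) ^ 2) :=
  oue_variance_minimizer_general N ε Var hVar
end

section
/- The local hashing variance function g ↦ (e^ε+g-1)²/(N(g-1)(e^ε-1)²), defined for real g > 1, is minimized at g = e^ε + 1, where its value is 4e^ε/(N(e^ε-1)²). -/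
theorem olh_variance_minimizer (N : ℕ) (hN : 0 < N) (ε : ℝ) (hε : 0 < ε)
    (Var : ℝ → ℝ)
    (hVar : ∀ g, Var g = (Real.exp ε + g - 1) ^ 2 / (N * (g - 1) * (Real.exp ε - 1) ^ 2)) :
    (∀ g : ℝ, 1 < g → Var (Real.exp ε + 1) ≤ Var g) ∧
      Var (Real.exp ε + 1) = 4 * Real.exp ε / (N * (Real.exp ε - 1) ^ 2) := by
  have he : 1 < Real.exp ε := by
    have := Real.exp_lt_exp.mpr hε
    simpa using this
  have hNpos : (0 : ℝ) < N := by exact_mod_cast hN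
  have hesq : (0 : ℝ) < (Real.exp ε - 1) ^ 2 := by nlinarith
  set e := Real.exp ε with hedef
  have hval : Var (e + 1) = 4 * e / (N * (e - 1) ^ 2) := by
    rw [hVar]
    have h1 : e + (e + 1) - 1 = 2 * e := by ring
    have h2 : (e + 1 - 1) = e := by ring
    rw [h1, h2]
    rw [div_eq_div_iff (mul_pos (mul_pos hNpos (by linarith : (0:ℝ) < e)) hesq).ne' (mul_pos hNpos hesq).ne']
    ring
  refine ⟨fun g hg => ?_, hval⟩
  rw [hval, hVar]
  have hg1 : (0 : ℝ) < g - 1 := by linarith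
  rw [div_le_div_iff₀ (mul_pos hNpos hesq) (mul_pos (mul_pos hNpos hg1) hesq)]
  nlinarith [sq_nonneg (e - g + 1), sq_nonneg (e - 1), mul_pos hNpos hesq,
    mul_pos (mul_pos hNpos hesq) hg1, sq_nonneg ((e - g + 1) * (e - 1))]
end

section
/- RAPPOR's permanent randomized response satisfies ε-LDP with ε = 2·ln((1−r/2)/(r/2)) per bit pair: for a single bit B[v], generating B₁[v]=1 with probability 1−r/2 if B[v]=1 and with probability r/2 if B[v]=0 (0 < r < 1), the ratio of output probabilities over any two length-k inputs differing in at most 2 bits is bounded by ((1−r/2)/(r/2))², i.e., the k-bit mechanism applied to one-hot encodings satisfies 2·ln((1−r/2)/(r/2))-LDP. -/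
/-!
Each output bit depends only on its own input bit, so the likelihood ratio of two inputs is a
product of per-bit ratios. A bit on which the inputs agree contributes `1`, and one on which they
differ contributes at most `ρ = (1 - r/2) / (r/2)`. Two one-hot vectors differ in at most two
coordinates, which gives the bound `ρ ^ 2 = exp (2 log ρ)`.
-/

open Finset

theorem prod_le_pow_hammingDist_mul_prod {ι β : Type*} [Fintype ι] [DecidableEq β]
    (f : ι → β → ℝ) {c : ℝ} (hf : ∀ i b, 0 ≤ f i b) (hc : ∀ i b b', f i b ≤ c * f i b')
    (x x' : ι → β) :
    ∏ i, f i (x i) ≤ c ^ hammingDist x x' * ∏ i, f i (x' i) := by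
  have hpow : ∏ i, (if x i ≠ x' i then c else 1) = c ^ hammingDist x x' := by
    rw [prod_ite, prod_const_one, mul_one, prod_const, hammingDist]
  calc ∏ i, f i (x i) ≤ ∏ i, (if x i ≠ x' i then c else 1) * f i (x' i) := by
        refine prod_le_prod (fun i _ => hf i _) fun i _ => ?_
        split_ifs with h
        · exact hc i _ _
        · rw [not_not.mp h, one_mul]
    _ = c ^ hammingDist x x' * ∏ i, f i (x' i) := by rw [prod_mul_distrib, hpow]

theorem hammingDist_const_false_le_one {ι : Type*} [Fintype ι] {x : ι → Bool}
    (hx : {i | x i = true}.Subsingleton) :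
    hammingDist x (fun _ => false) ≤ 1 :=
  card_le_one.mpr fun i hi j hj => by
    simp only [mem_filter, mem_univ, true_and, ne_eq, Bool.not_eq_false] at hi hj
    exact hx hi hj

theorem hammingDist_le_two_of_subsingleton {ι : Type*} [Fintype ι] {x y : ι → Bool}
    (hx : {i | x i = true}.Subsingleton) (hy : {i | y i = true}.Subsingleton) :
    hammingDist x y ≤ 2 :=
  calc hammingDist x y ≤ hammingDist x (fun _ => false) + hammingDist (fun _ => false) y :=
        hammingDist_triangle _ _ _
    _ ≤ 1 + 1 := by
        rw [hammingDist_comm _ y]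
        exact add_le_add (hammingDist_const_false_le_one hx) (hammingDist_const_false_le_one hy)

noncomputable def prrBit (r : ℝ) (input output : Bool) : ℝ :=
  if output then (if input then 1 - r / 2 else r / 2)
  else (if input then r / 2 else 1 - r / 2)

noncomputable def prrRatio (r : ℝ) : ℝ := (1 - r / 2) / (r / 2)

theorem one_le_prrRatio {r : ℝ} (hr0 : 0 < r) (hr1 : r ≤ 1) : 1 ≤ prrRatio r := by
  rw [prrRatio, one_le_div (by positivity)]
  linarith

theorem prrBit_nonneg {r : ℝ} (hr0 : 0 < r) (hr1 : r ≤ 1) (input output : Bool) :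
    0 ≤ prrBit r input output := by
  unfold prrBit
  split_ifs <;> linarith

theorem prrBit_le_prrRatio_mul {r : ℝ} (hr0 : 0 < r) (hr1 : r ≤ 1) (b b' o : Bool) :
    prrBit r b o ≤ prrRatio r * prrBit r b' o := by
  have hρ := one_le_prrRatio hr0 hr1
  have hcancel : prrRatio r * (r / 2) = 1 - r / 2 := div_mul_cancel₀ _ (by positivity)
  unfold prrBit
  cases b <;> cases b' <;> cases o <;>
    simp only [Bool.false_eq_true, if_true, if_false, hcancel] <;> nlinarith

theorem exp_two_mul_log_prrRatio {r : ℝ} (hr0 : 0 < r) (hr1 : r ≤ 1) :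
    Real.exp (2 * Real.log (prrRatio r)) = prrRatio r ^ 2 := by
  have hρ : 0 < prrRatio r := one_pos.trans_le (one_le_prrRatio hr0 hr1)
  rw [← Real.log_rpow hρ, Real.exp_log (by positivity), Real.rpow_two]

theorem rappor_prr_ldp (k : ℕ) (r : ℝ) (hr0 : 0 < r) (hr1 : r < 1)
    (P : (Fin k → Bool) → (Fin k → Bool) → ℝ)
    (hP : ∀ B y, P B y = ∏ i,
      (if y i then (if B i then 1 - r / 2 else r / 2)
       else (if B i then r / 2 else 1 - r / 2))) :
    ∀ B B' : Fin k → Bool, (∃! i, B i = true) → (∃! i, B' i = true) →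
      ∀ y, P B y ≤ Real.exp (2 * Real.log ((1 - r / 2) / (r / 2))) * P B' y := by
  intro B B' hB hB' y
  have hdist : hammingDist B B' ≤ 2 :=
    hammingDist_le_two_of_subsingleton (fun _ hi _ hj => hB.unique hi hj)
      (fun _ hi _ hj => hB'.unique hi hj)
  rw [hP, hP, show (1 - r / 2) / (r / 2) = prrRatio r from rfl,
    exp_two_mul_log_prrRatio hr0 hr1.le]
  calc ∏ i, prrBit r (B i) (y i)
      ≤ prrRatio r ^ hammingDist B B' * ∏ i, prrBit r (B' i) (y i) :=
        prod_le_pow_hammingDist_mul_prod (fun i b => prrBit r b (y i))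
          (fun _ _ => prrBit_nonneg hr0 hr1.le _ _)
          (fun _ _ _ => prrBit_le_prrRatio_mul hr0 hr1.le _ _ _) B B'
    _ ≤ prrRatio r ^ 2 * ∏ i, prrBit r (B' i) (y i) := by
        have := one_le_prrRatio hr0 hr1.le
        gcongr
        exact prod_nonneg fun _ _ => prrBit_nonneg hr0 hr1.le _ _
end

section
/- Harmony's single-dimension randomizer is unbiased: for input value t ∈ [−1,1], outputting x = d·(e^ε+1)/(e^ε−1) with probability (t(e^ε−1)+e^ε+1)/(2(e^ε+1)) and x = −d·(e^ε+1)/(e^ε−1) with probability (−t(e^ε−1)+e^ε+1)/(2(e^ε+1)) satisfies E[x] = d·t. -/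
theorem harmony_unbiased (ε : ℝ) (hε : 0 < ε) (d : ℕ) (hd : 0 < d)
    (t : ℝ) (ht : -1 ≤ t) (ht1 : t ≤ 1) :
    ((t * (Real.exp ε - 1) + Real.exp ε + 1) / (2 * (Real.exp ε + 1))) *
        ((d : ℝ) * (Real.exp ε + 1) / (Real.exp ε - 1)) +
      ((-t * (Real.exp ε - 1) + Real.exp ε + 1) / (2 * (Real.exp ε + 1))) *
        (-((d : ℝ) * (Real.exp ε + 1) / (Real.exp ε - 1))) = d * t := by
  have h1 : Real.exp ε - 1 ≠ 0 := by
    nlinarith [Real.add_one_lt_exp hε.ne']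
  have h2 : Real.exp ε + 1 ≠ 0 := by positivity
  field_simp
  ring
end

section
/- Harmony's single-dimension randomizer satisfies ε-LDP: for inputs t, t' ∈ [−1,1] and either output x ∈ {±d(e^ε+1)/(e^ε−1)}, the ratio P[x|t]/P[x|t'] is at most e^ε. -/
theorem harmony_ldp (ε : ℝ) (hε : 0 < ε) (d : ℕ) (hd : 1 ≤ d) (P : ℝ → ℝ → ℝ)
    (hP : ∀ t x, P t x =
      if x = (d : ℝ) * (Real.exp ε + 1) / (Real.exp ε - 1) then
        (t * (Real.exp ε - 1) + Real.exp ε + 1) / (2 * (Real.exp ε + 1))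
      else if x = -((d : ℝ) * (Real.exp ε + 1) / (Real.exp ε - 1)) then
        (-t * (Real.exp ε - 1) + Real.exp ε + 1) / (2 * (Real.exp ε + 1))
      else 0) :
    ∀ t ∈ Set.Icc (-1 : ℝ) 1, ∀ t' ∈ Set.Icc (-1 : ℝ) 1,
      ∀ x, P t x ≤ Real.exp ε * P t' x := by
  intro t ht t' ht' x
  have hE : 1 < Real.exp ε := by
    have := Real.exp_lt_exp.mpr hε
    simpa using this
  obtain ⟨ht1, ht2⟩ := ht
  obtain ⟨ht1', ht2'⟩ := ht'
  rw [hP, hP]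
  set E := Real.exp ε
  have hE1 : 0 < E - 1 := by linarith
  have hE2 : 0 < 2 * (E + 1) := by linarith
  split_ifs with h1 h2
  · rw [div_le_iff₀ hE2, mul_assoc, div_mul_cancel₀ _ (ne_of_gt hE2)]
    nlinarith [mul_nonneg (by linarith : (0:ℝ) ≤ 1 - t) hE1.le,
      mul_nonneg (mul_nonneg (by linarith : (0:ℝ) ≤ E) (by linarith : (0:ℝ) ≤ t' + 1)) hE1.le]
  · rw [div_le_iff₀ hE2, mul_assoc, div_mul_cancel₀ _ (ne_of_gt hE2)]
    nlinarith [mul_nonneg (by linarith : (0:ℝ) ≤ 1 + t) hE1.le,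
      mul_nonneg (mul_nonneg (by linarith : (0:ℝ) ≤ E) (by linarith : (0:ℝ) ≤ 1 - t')) hE1.le]
  · simp
end
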